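/- For every integer h ≥ 0 and every integer ℓ ≥ 4, the tree T_{h,ℓ} has pathwidth exactly h; moreover every vertex of T_{h,ℓ} has degree at most 3. -/

import Mathlib

/-- The vertex type of the hard-instance tree `T_{h,ℓ}`: `T_{0,ℓ}` is a single vertex,
and a vertex of `T_{h+1,ℓ}` is a spine position `i : Fin ℓ` together with either `none`
(the spine vertex `p^{h+1}_{i+1}` itself) or `some v` for a vertex `v` of the copy of
`T_{h,ℓ}` attached at spine position `i`. -/
def Vtx (ℓ : ℕ) : ℕ → Type
  | 0 => Unit
  | h + 1 => Fin ℓ × Option (Vtx ℓ h)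

instance VtxFintype (ℓ : ℕ) : ∀ h, Fintype (Vtx ℓ h)
  | 0 => inferInstanceAs (Fintype Unit)
  | h + 1 =>
      letI := VtxFintype ℓ h
      inferInstanceAs (Fintype (Fin ℓ × Option (Vtx ℓ h)))

instance VtxDecEq (ℓ : ℕ) : ∀ h, DecidableEq (Vtx ℓ h)
  | 0 => inferInstanceAs (DecidableEq Unit)
  | h + 1 =>
      letI := VtxDecEq ℓ h
      inferInstanceAs (DecidableEq (Fin ℓ × Option (Vtx ℓ h)))

/-- The root of `T_{h,ℓ}`: the first spine vertex `p^h_1`. -/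
def treeRoot (ℓ : ℕ) [NeZero ℓ] : ∀ h, Vtx ℓ h
  | 0 => ()
  | _ + 1 => ((0 : Fin ℓ), none)

/-- One direction of the edge relation of `T_{h,ℓ}`: consecutive spine vertices are
adjacent, each spine vertex is adjacent to the root of the copy of `T_{h-1,ℓ}`
attached to it, and edges inside an attached copy are those of `T_{h-1,ℓ}`. -/
def treeAdj (ℓ : ℕ) [NeZero ℓ] : ∀ h, Vtx ℓ h → Vtx ℓ h → Prop
  | 0, _, _ => False
  | h + 1, a, b =>
      (a.2 = none ∧ b.2 = none ∧ a.1.val + 1 = b.1.val) ∨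
      (a.1 = b.1 ∧ a.2 = none ∧ b.2 = some (treeRoot ℓ h)) ∨
      (a.1 = b.1 ∧ ∃ x y, a.2 = some x ∧ b.2 = some y ∧ treeAdj ℓ h x y)

/-- The hard-instance tree `T_{h,ℓ}` as a simple graph. -/
def treeT (ℓ : ℕ) [NeZero ℓ] (h : ℕ) : SimpleGraph (Vtx ℓ h) :=
  SimpleGraph.fromRel (treeAdj ℓ h)

/-- The bottom-level vertex `v_α` determined by a sequence of descent choices
`α = (i_k, …, i_1)` (here `α j` is the 0-indexed spine position chosen at the
`j`-th level from the top, so `α 0` is the top-level choice `i_k`). -/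
def vAlpha (ℓ : ℕ) : ∀ k, (Fin k → Fin ℓ) → Vtx ℓ k
  | 0, _ => ()
  | k + 1, α => (α 0, some (vAlpha ℓ k fun j => α j.succ))

/-- A path decomposition of a graph. -/
structure PathDecomp {V : Type} (G : SimpleGraph V) where
  m : ℕ
  bags : Fin m → Finset V
  cover : ∀ v, ∃ i, v ∈ bags i
  edgeCover : ∀ ⦃u v⦄, G.Adj u v → ∃ i, u ∈ bags i ∧ v ∈ bags i
  interval : ∀ (v : V) (i j k : Fin m), i ≤ j → j ≤ k → v ∈ bags i → v ∈ bags k → v ∈ bags j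

/-- The pathwidth of a graph: the least `w` such that there is a path
decomposition all of whose bags have at most `w + 1` vertices. -/
noncomputable def pathwidth {V : Type} (G : SimpleGraph V) : ℕ :=
  sInf { w | ∃ D : PathDecomp G, ∀ i, (D.bags i).card ≤ w + 1 }

attribute [reducible] Vtx

set_option maxHeartbeats 1000000 in
section
end

section Aux
variable (ℓ : ℕ) [NeZero ℓ]

/-- embedding of the i-th copy -/
def phi (i : Fin ℓ) (h : ℕ) (v : Vtx ℓ h) : Vtx ℓ (h + 1) := (i, some v)

lemma phi_inj (i : Fin ℓ) (h : ℕ) : Function.Injective (phi ℓ i h) := by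
  intro a b hab
  exact Option.some.inj (congrArg Prod.snd hab)

lemma adj_phi {i : Fin ℓ} {h : ℕ} {x y : Vtx ℓ h} (hxy : (treeT ℓ h).Adj x y) :
    (treeT ℓ (h + 1)).Adj (phi ℓ i h x) (phi ℓ i h y) := by
  rw [treeT, SimpleGraph.fromRel_adj] at hxy ⊢
  obtain ⟨hne, hor⟩ := hxy
  refine ⟨fun hcon => hne (Option.some.inj (congrArg Prod.snd hcon)), ?_⟩
  rcases hor with hA | hA
  · exact Or.inl (Or.inr (Or.inr ⟨rfl, x, y, rfl, rfl, hA⟩))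
  · exact Or.inr (Or.inr (Or.inr ⟨rfl, y, x, rfl, rfl, hA⟩))

lemma adj_spine {h : ℕ} {i j : Fin ℓ} (hij : i.val + 1 = j.val) :
    (treeT ℓ (h + 1)).Adj (i, none) (j, none) := by
  rw [treeT, SimpleGraph.fromRel_adj]
  constructor
  · intro hcon
    have hc : i.val = j.val := congrArg (fun p : Fin ℓ × Option (Vtx ℓ h) => p.1.val) hcon
    omega
  · exact Or.inl (Or.inl ⟨rfl, rfl, hij⟩)

end Aux

set_option linter.unusedSectionVars false

section Walks
variable (ℓ : ℕ) [NeZero ℓ]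

/-- graph hom version of phi -/
def phiHom (i : Fin ℓ) (h : ℕ) : treeT ℓ h →g treeT ℓ (h + 1) where
  toFun := phi ℓ i h
  map_rel' := adj_phi ℓ

/-- A walk from any vertex of the i-th copy up to the spine vertex, staying in
spine position i. -/
lemma walk_to_spine (h : ℕ) (i : Fin ℓ) (x : Vtx ℓ h) :
    ∃ W : (treeT ℓ (h+1)).Walk (i, some x) (i, none),
      ∀ z ∈ W.support, z.1 = i := by
  -- first: walk from x to the root, inside treeT ℓ h
  have conn : ∀ (h : ℕ) (x : Vtx ℓ h), ∃ W : (treeT ℓ h).Walk x (treeRoot ℓ h), True := by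
    intro h
    induction h with
    | zero => intro x; exact ⟨SimpleGraph.Walk.nil' x, trivial⟩
    | succ h ih =>
      -- first, spine walk from (j, none) to (0, none)
      have spine : ∀ j : Fin ℓ, ∃ W : (treeT ℓ (h+1)).Walk (j, none) ((0 : Fin ℓ), none), True := by
        intro j
        obtain ⟨jv, hjv⟩ := j
        induction jv with
        | zero =>
          have : (⟨0, hjv⟩ : Fin ℓ) = (0 : Fin ℓ) := by
            ext; simp
          rw [this]
          exact ⟨SimpleGraph.Walk.nil, trivial⟩
        | succ n ihn =>
          obtain ⟨W, _⟩ := ihn (Nat.lt_of_succ_lt hjv)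
          have hadj : (treeT ℓ (h+1)).Adj (⟨n+1, hjv⟩, none) (⟨n, Nat.lt_of_succ_lt hjv⟩, none) :=
            ((adj_spine ℓ (h := h) (i := ⟨n, Nat.lt_of_succ_lt hjv⟩) (j := ⟨n+1, hjv⟩) rfl)).symm
          exact ⟨SimpleGraph.Walk.cons hadj W, trivial⟩
      intro x
      obtain ⟨j, o⟩ := x
      obtain ⟨Ws, _⟩ := spine j
      cases o with
      | none => exact ⟨Ws, trivial⟩
      | some v =>
        obtain ⟨Wv, _⟩ := ih v
        have hadj : (treeT ℓ (h+1)).Adj (j, some (treeRoot ℓ h)) (j, none) := by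
          rw [treeT, SimpleGraph.fromRel_adj]
          exact ⟨fun hcon => Option.some_ne_none _ (congrArg Prod.snd hcon),
            Or.inr (Or.inr (Or.inl ⟨rfl, rfl, rfl⟩))⟩
        exact ⟨((Wv.map (phiHom ℓ j h)).append
          (SimpleGraph.Walk.cons hadj SimpleGraph.Walk.nil)).append Ws, trivial⟩
  obtain ⟨Wv, _⟩ := conn h x
  have hadj : (treeT ℓ (h+1)).Adj (i, some (treeRoot ℓ h)) (i, none) := by
    rw [treeT, SimpleGraph.fromRel_adj]
    exact ⟨fun hcon => Option.some_ne_none _ (congrArg Prod.snd hcon),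
      Or.inr (Or.inr (Or.inl ⟨rfl, rfl, rfl⟩))⟩
  refine ⟨(Wv.map (phiHom ℓ i h)).append (SimpleGraph.Walk.cons hadj SimpleGraph.Walk.nil), ?_⟩
  intro z hz
  replace hz := (SimpleGraph.Walk.mem_support_append_iff _ _).mp hz
  rcases hz with hz | hz
  · replace hz := Eq.mp (congrArg (z ∈ ·) (SimpleGraph.Walk.support_map _ _)) hz
    obtain ⟨w, _, rfl⟩ := List.mem_map.mp hz
    rfl
  · change z ∈ ([(i, some (treeRoot ℓ h)), (i, none)] : List (Vtx ℓ (h+1))) at hz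
    simp at hz
    rcases hz with rfl | rfl <;> rfl

/-- Spine walk between any two spine vertices, staying on the spine. -/
lemma spine_walk (h : ℕ) (i j : Fin ℓ) :
    ∃ W : (treeT ℓ (h+1)).Walk (i, none) (j, none),
      ∀ z ∈ W.support, z.2 = none := by
  -- reduce to i to 0
  have to0 : ∀ j : Fin ℓ, ∃ W : (treeT ℓ (h+1)).Walk (j, none) ((0:Fin ℓ), none),
      ∀ z ∈ W.support, z.2 = none := by
    intro j
    obtain ⟨jv, hjv⟩ := j
    induction jv with
    | zero =>
      have : (⟨0, hjv⟩ : Fin ℓ) = (0 : Fin ℓ) := by ext; simp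
      rw [this]
      exact ⟨SimpleGraph.Walk.nil, by intro z hz; simp at hz; rw [hz]⟩
    | succ n ihn =>
      obtain ⟨W, hW⟩ := ihn (Nat.lt_of_succ_lt hjv)
      have hadj : (treeT ℓ (h+1)).Adj (⟨n+1, hjv⟩, none) (⟨n, Nat.lt_of_succ_lt hjv⟩, none) :=
        ((adj_spine ℓ (h := h) (i := ⟨n, Nat.lt_of_succ_lt hjv⟩) (j := ⟨n+1, hjv⟩) rfl)).symm
      refine ⟨SimpleGraph.Walk.cons hadj W, ?_⟩
      intro z hz
      rw [SimpleGraph.Walk.support_cons] at hz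
      rcases List.mem_cons.mp hz with rfl | hz
      · rfl
      · exact hW z hz
  obtain ⟨Wi, hWi⟩ := to0 i
  obtain ⟨Wj, hWj⟩ := to0 j
  refine ⟨Wi.append Wj.reverse, ?_⟩
  intro z hz
  rw [SimpleGraph.Walk.mem_support_append_iff] at hz
  rcases hz with hz | hz
  · exact hWi z hz
  · exact hWj z (by rwa [SimpleGraph.Walk.support_reverse, List.mem_reverse] at hz)

end Walks

/-- If a walk starts in bag `i` and ends in bag `k`, and `i ≤ j ≤ k`, then some vertex of
the walk lies in bag `j`. -/
lemma walk_crosses {V : Type} {G : SimpleGraph V} (D : PathDecomp G)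
    {u w : V} (W : G.Walk u w) :
    ∀ (i j k : Fin D.m), i ≤ j → j ≤ k → u ∈ D.bags i → w ∈ D.bags k →
      ∃ z ∈ W.support, z ∈ D.bags j := by
  induction W with
  | @nil a =>
    intro i j k hij hjk hu hw
    exact ⟨a, by simp, D.interval a i j k hij hjk hu hw⟩
  | @cons a b c hab W ih =>
    intro i j k hij hjk hu hw
    obtain ⟨t, hat, hbt⟩ := D.edgeCover hab
    by_cases ht : j ≤ t
    · exact ⟨a, by simp, D.interval a i j t hij ht hu hat⟩
    · push_neg at ht
      obtain ⟨z, hz, hzj⟩ := ih t j k (le_of_lt ht) hjk hbt hw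
      exact ⟨z, by simp [hz], hzj⟩

/-- Restriction of a path decomposition along an injective graph homomorphism. -/
noncomputable def PathDecomp.pull {V W : Type} [DecidableEq V] [DecidableEq W] {G : SimpleGraph V}
    {H : SimpleGraph W} (f : G →g H) (hf : Function.Injective f)
    (D : PathDecomp H) : PathDecomp G where
  m := D.m
  bags i := (D.bags i).preimage f (hf.injOn)
  cover v := by
    obtain ⟨i, hi⟩ := D.cover (f v)
    exact ⟨i, Finset.mem_preimage.mpr hi⟩
  edgeCover u v huv := by
    obtain ⟨i, hu, hv⟩ := D.edgeCover (f.map_adj huv)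
    exact ⟨i, Finset.mem_preimage.mpr hu, Finset.mem_preimage.mpr hv⟩
  interval v i j k hij hjk hi hk := by
    rw [Finset.mem_preimage] at *
    exact D.interval (f v) i j k hij hjk hi hk

lemma three_sorted {m : ℕ} (j : Fin 3 → Fin m)
    (h01 : j 0 ≠ j 1) (h12 : j 1 ≠ j 2) (h02 : j 0 ≠ j 2) :
    ∃ p q r : Fin 3, j p < j q ∧ j q < j r := by
  rcases lt_or_gt_of_ne h01 with h1 | h1 <;> rcases lt_or_gt_of_ne h12 with h2 | h2 <;>
    rcases lt_or_gt_of_ne h02 with h3 | h3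
  · exact ⟨0, 1, 2, h1, h2⟩
  · exact ⟨0, 1, 2, h1, h2⟩
  · exact ⟨0, 2, 1, h3, h2⟩
  · exact ⟨2, 0, 1, h3, h1⟩
  · exact ⟨1, 0, 2, h1, h3⟩
  · exact ⟨1, 2, 0, h2, h3⟩
  · exact (lt_asymm (h2.trans h1) h3).elim
  · exact ⟨2, 1, 0, h2, h1⟩

lemma lb (ℓ : ℕ) [NeZero ℓ] (hℓ : 3 ≤ ℓ) :
    ∀ (h : ℕ) (D : PathDecomp (treeT ℓ h)), ∃ b, h + 1 ≤ (D.bags b).card := by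
  intro h
  induction h with
  | zero =>
    intro D
    obtain ⟨i, hi⟩ := D.cover ()
    exact ⟨i, Finset.card_pos.mpr ⟨(), hi⟩⟩
  | succ h ih =>
    intro D
    by_contra hcon
    push_neg at hcon
    -- each bag has card ≤ h + 1
    have hbag : ∀ b, (D.bags b).card ≤ h + 1 := fun b => by
      have := hcon b; omega
    -- for each copy i, find a bag fully inside copy i
    have copybag : ∀ i : Fin ℓ, ∃ b : Fin D.m,
        (D.bags b).Nonempty ∧ ∀ z ∈ D.bags b, ∃ x, z = (i, some x) := by
      intro i
      obtain ⟨b, hb⟩ := ih (D.pull (phiHom ℓ i h) (phi_inj ℓ i h))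
      refine ⟨b, ?_, ?_⟩
      · -- nonempty
        have : (0:ℕ) < ((D.bags b).preimage (phiHom ℓ i h) ((phi_inj ℓ i h).injOn)).card := by
          simpa [PathDecomp.pull] using Nat.lt_of_lt_of_le (Nat.succ_pos h) hb
        obtain ⟨x, hx⟩ := Finset.card_pos.mp this
        exact ⟨_, Finset.mem_preimage.mp hx⟩
      · -- the image of the preimage fills the whole bag
        intro z hz
        set P := (D.bags b).preimage (phiHom ℓ i h) ((phi_inj ℓ i h).injOn) with hP
        have himg : P.image (phiHom ℓ i h) ⊆ D.bags b := by
          intro w hw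
          obtain ⟨x, hx, rfl⟩ := Finset.mem_image.mp hw
          exact Finset.mem_preimage.mp hx
        have hcard : (D.bags b).card ≤ (P.image (phiHom ℓ i h)).card := by
          rw [Finset.card_image_of_injective P
            (show Function.Injective (⇑(phiHom ℓ i h)) from phi_inj ℓ i h)]
          calc (D.bags b).card ≤ h + 1 := hbag b
          _ ≤ P.card := by simpa [PathDecomp.pull] using hb
        have heq : P.image (phiHom ℓ i h) = D.bags b :=
          Finset.eq_of_subset_of_card_le himg hcard
        rw [← heq] at hz
        obtain ⟨x, _, rfl⟩ := Finset.mem_image.mp hz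
        exact ⟨x, rfl⟩
    choose bg hne hcopy using copybag
    -- bg is injective
    have bginj : ∀ i j : Fin ℓ, bg i = bg j → i = j := by
      intro i j hij
      obtain ⟨z, hz⟩ := hne i
      obtain ⟨x, rfl⟩ := hcopy i z hz
      rw [hij] at hz
      obtain ⟨y, hy⟩ := hcopy j _ hz
      exact congrArg Prod.fst hy
    -- three distinct copies, sorted
    set c : Fin 3 → Fin ℓ := fun t => ⟨t.val, lt_of_lt_of_le t.isLt hℓ⟩ with hc
    have cinj : Function.Injective c := by
      intro s t hst
      have h2 : (c s).val = (c t).val := congrArg Fin.val hst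
      rw [hc] at h2
      exact Fin.ext h2
    obtain ⟨p, q, r, hpq, hqr⟩ := three_sorted (fun t => bg (c t))
      (fun hh => by have := cinj (bginj _ _ hh); omega)
      (fun hh => by have := cinj (bginj _ _ hh); simp at this)
      (fun hh => by have := cinj (bginj _ _ hh); simp at this)
    set iA := c p; set iM := c q; set iC := c r
    have hAM : iA ≠ iM := fun hh => absurd (congrArg bg hh) (ne_of_lt hpq)
    have hCM : iC ≠ iM := fun hh => absurd (congrArg bg hh) (ne_of_gt hqr)
    obtain ⟨u, hu⟩ := hne iA
    obtain ⟨x, rfl⟩ := hcopy iA u hu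
    obtain ⟨w, hw⟩ := hne iC
    obtain ⟨y, rfl⟩ := hcopy iC w hw
    obtain ⟨W1, hW1⟩ := walk_to_spine ℓ h iA x
    obtain ⟨W2, hW2⟩ := spine_walk ℓ h iA iC
    obtain ⟨W3, hW3⟩ := walk_to_spine ℓ h iC y
    obtain ⟨z, hzsup, hzbag⟩ := walk_crosses D (W1.append (W2.append W3.reverse))
      (bg iA) (bg iM) (bg iC) (le_of_lt hpq) (le_of_lt hqr) hu hw
    obtain ⟨v, hv⟩ := hcopy iM z hzbag
    subst hv
    rw [SimpleGraph.Walk.mem_support_append_iff] at hzsup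
    rcases hzsup with hz | hz
    · exact hAM.symm (hW1 _ hz)
    · rw [SimpleGraph.Walk.mem_support_append_iff] at hz
      rcases hz with hz | hz
      · exact Option.some_ne_none _ (hW2 _ hz)
      · rw [SimpleGraph.Walk.support_reverse, List.mem_reverse] at hz
        exact hCM.symm (hW3 _ hz)

lemma vpair_eq {ℓ h : ℕ} {a c : Fin ℓ} {b d : Option (Vtx ℓ h)} :
    ((a, b) : Vtx ℓ (h+1)) = (c, d) ↔ a = c ∧ b = d := by
  constructor
  · intro hh; exact ⟨congrArg Prod.fst hh, congrArg Prod.snd hh⟩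
  · rintro ⟨rfl, rfl⟩; rfl

lemma ub (ℓ : ℕ) [NeZero ℓ] : ∀ h, ∃ D : PathDecomp (treeT ℓ h), ∀ i, (D.bags i).card ≤ h + 1 := by
  intro h
  induction h with
  | zero =>
    refine ⟨⟨1, fun _ => {()}, fun v => ⟨0, Finset.mem_singleton.mpr rfl⟩, ?_, ?_⟩, ?_⟩
    · intro u v huv
      rw [treeT, SimpleGraph.fromRel_adj] at huv
      rcases huv.2 with hf | hf <;> exact hf.elim
    · intro v i j k _ _ _ _; exact Finset.mem_singleton.mpr rfl
    · intro i; simp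
  | succ h ih =>
    obtain ⟨D, hD⟩ := ih
    set B := D.m + 1 with hB
    have hBpos : 0 < B := Nat.succ_pos _
    have hℓpos : 0 < ℓ := Nat.pos_of_ne_zero (NeZero.ne ℓ)
    set M := ℓ * B with hM
    have hdivlt : ∀ t : Fin M, t.val / B < ℓ := by
      intro t
      rw [Nat.div_lt_iff_lt_mul hBpos]
      calc t.val < M := t.isLt
      _ = ℓ * B := hM
      _ ≤ ℓ * B := le_refl _
    set bagF : Fin M → Finset (Vtx ℓ (h+1)) := fun t =>
      if hr : t.val % B < D.m then
        insert ((⟨t.val / B, hdivlt t⟩ : Fin ℓ), (none : Option (Vtx ℓ h)))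
          ((D.bags ⟨t.val % B, hr⟩).image (fun x => ((⟨t.val / B, hdivlt t⟩ : Fin ℓ), some x)))
      else
        if hq : t.val / B + 1 < ℓ then
          {((⟨t.val / B, hdivlt t⟩ : Fin ℓ), (none : Option (Vtx ℓ h))),
           ((⟨t.val / B + 1, hq⟩ : Fin ℓ), (none : Option (Vtx ℓ h)))}
        else {((⟨t.val / B, hdivlt t⟩ : Fin ℓ), (none : Option (Vtx ℓ h)))}
      with hbagF
    -- membership characterizations
    have mem_none : ∀ (t : Fin M) (i : Fin ℓ),
        ((i, none) : Vtx ℓ (h+1)) ∈ bagF t ↔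
          (t.val / B = i.val ∨ (t.val % B = D.m ∧ t.val / B + 1 = i.val)) := by
      intro t i
      have hmod : t.val % B < B := Nat.mod_lt t.val hBpos
      have hi := i.isLt
      simp only [hbagF]
      split_ifs with hr hq
      · constructor
        · intro hmem
          rcases Finset.mem_insert.mp hmem with h1 | h1
          · have := congrArg Fin.val (congrArg Prod.fst h1)
            simp only [Fin.val_mk] at this  -- placeholderA
            omega
          · obtain ⟨y, -, he⟩ := Finset.mem_image.mp h1
            exact absurd (congrArg Prod.snd he) (by simp)
        · intro hmem
          have hd : t.val / B = i.val := by omega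
          exact Finset.mem_insert.mpr (Or.inl (vpair_eq.mpr ⟨Fin.ext hd.symm, rfl⟩))
      · constructor
        · intro hmem
          rcases Finset.mem_insert.mp hmem with h1 | h1
          · have := congrArg Fin.val (congrArg Prod.fst h1)
            simp only [Fin.val_mk] at this
            omega
          · have := congrArg Fin.val (congrArg Prod.fst (Finset.mem_singleton.mp h1))
            simp only [Fin.val_mk] at this
            omega
        · intro hmem
          rcases hmem with hd | ⟨-, hd⟩
          · exact Finset.mem_insert.mpr (Or.inl (vpair_eq.mpr ⟨Fin.ext hd.symm, rfl⟩))
          · exact Finset.mem_insert.mpr (Or.inr (Finset.mem_singleton.mpr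
              (vpair_eq.mpr ⟨Fin.ext hd.symm, rfl⟩)))
      · constructor
        · intro hmem
          have := congrArg Fin.val (congrArg Prod.fst (Finset.mem_singleton.mp hmem))
          simp only [Fin.val_mk] at this
          omega
        · intro hmem
          have hd : t.val / B = i.val := by omega
          exact Finset.mem_singleton.mpr (vpair_eq.mpr ⟨Fin.ext hd.symm, rfl⟩)
    have mem_some : ∀ (t : Fin M) (i : Fin ℓ) (x : Vtx ℓ h),
        ((i, some x) : Vtx ℓ (h+1)) ∈ bagF t ↔
          (t.val / B = i.val ∧ ∃ hr : t.val % B < D.m, x ∈ D.bags ⟨t.val % B, hr⟩) := by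
      intro t i x
      simp only [hbagF]
      split_ifs with hr hq
      · constructor
        · intro hmem
          rcases Finset.mem_insert.mp hmem with h1 | h1
          · exact absurd (congrArg Prod.snd h1) (by simp)
          · obtain ⟨y, hy, he⟩ := Finset.mem_image.mp h1
            obtain rfl : y = x := Option.some.inj (congrArg Prod.snd he)
            have hfst := congrArg Fin.val (congrArg Prod.fst he)
            simp only [Fin.val_mk] at hfst
            exact ⟨hfst, hr, hy⟩
        · rintro ⟨h1, hr', hx⟩
          exact Finset.mem_insert.mpr (Or.inr (Finset.mem_image.mpr
            ⟨x, hx, vpair_eq.mpr ⟨Fin.ext h1, rfl⟩⟩))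
      · constructor
        · intro hmem
          rcases Finset.mem_insert.mp hmem with h1 | h1
          · exact absurd (congrArg Prod.snd h1).symm (by simp)
          · exact absurd (congrArg Prod.snd (Finset.mem_singleton.mp h1)).symm (by simp)
        · rintro ⟨-, hr', -⟩; exact absurd hr' hr
      · constructor
        · intro hmem
          exact absurd (congrArg Prod.snd (Finset.mem_singleton.mp hmem)).symm (by simp)
        · rintro ⟨-, hr', -⟩; exact absurd hr' hr
    -- index builder
    have mkIdx : ∀ (i : Fin ℓ) (j : ℕ), j ≤ D.m → ∃ t : Fin M,
        t.val / B = i.val ∧ t.val % B = j := by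
      intro i j hj
      have hlt : i.val * B + j < M := by
        have h1 : i.val + 1 ≤ ℓ := i.isLt
        calc i.val * B + j < i.val * B + B := by omega
        _ = (i.val + 1) * B := by ring
        _ ≤ ℓ * B := Nat.mul_le_mul_right B h1
      refine ⟨⟨i.val * B + j, hlt⟩, ?_, ?_⟩
      · show (i.val * B + j) / B = i.val
        rw [Nat.add_comm, Nat.add_mul_div_right _ _ hBpos, Nat.div_eq_of_lt (by omega)]
        omega
      · show (i.val * B + j) % B = j
        rw [Nat.add_comm, Nat.add_mul_mod_self_right]
        exact Nat.mod_eq_of_lt (by omega)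
    -- monotonicity helper: same quotient, t ≤ t' gives mod ≤ mod
    have mod_mono : ∀ t t' : Fin M, t ≤ t' → t.val / B = t'.val / B →
        t.val % B ≤ t'.val % B := by
      intro t t' htt hdd
      have e1 := Nat.div_add_mod t.val B
      have e2 := Nat.div_add_mod t'.val B
      have htt' : t.val ≤ t'.val := htt
      by_contra hcon
      push_neg at hcon
      have : B * (t'.val / B) + t'.val % B < B * (t.val / B) + t.val % B := by
        rw [hdd]; omega
      omega
    have div_mono : ∀ t t' : Fin M, t ≤ t' → t.val / B ≤ t'.val / B :=
      fun t t' htt => Nat.div_le_div_right htt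
    refine ⟨⟨M, bagF, ?_, ?_, ?_⟩, ?_⟩
    · -- cover
      rintro ⟨i, o⟩
      cases o with
      | none =>
        obtain ⟨t, hd, hm⟩ := mkIdx i D.m (le_refl _)
        exact ⟨t, (mem_none t i).mpr (Or.inl hd)⟩
      | some x =>
        obtain ⟨j, hj⟩ := D.cover x
        obtain ⟨t, hd, hm⟩ := mkIdx i j.val (le_of_lt j.isLt)
        refine ⟨t, (mem_some t i x).mpr ⟨hd, by rw [hm]; exact j.isLt, ?_⟩⟩
        convert hj using 2
        exact Fin.ext hm
    · -- edgeCover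
      intro u v huv
      rw [treeT, SimpleGraph.fromRel_adj] at huv
      obtain ⟨hne, hor⟩ := huv
      -- symmetric goal, so wlog treeAdj u v
      have key : ∀ u v : Vtx ℓ (h+1), u ≠ v → treeAdj ℓ (h+1) u v →
          ∃ t, u ∈ bagF t ∧ v ∈ bagF t := by
        clear hne hor u v
        rintro ⟨i, o⟩ ⟨i', o'⟩ hne hadj
        rcases hadj with ⟨h1, h2, h3⟩ | ⟨h1, h2, h3⟩ | ⟨h1, x, y, h2, h3, h4⟩
        · -- spine edge
          simp only at h1 h2 h3
          subst h1; subst h2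
          obtain ⟨t, hd, hm⟩ := mkIdx i D.m (le_refl _)
          exact ⟨t, (mem_none t i).mpr (Or.inl hd),
            (mem_none t i').mpr (Or.inr ⟨hm, by omega⟩)⟩
        · -- spine to root
          simp only at h1 h2 h3
          subst h1; subst h2; subst h3
          obtain ⟨j, hj⟩ := D.cover (treeRoot ℓ h)
          obtain ⟨t, hd, hm⟩ := mkIdx i j.val (le_of_lt j.isLt)
          refine ⟨t, (mem_none t i).mpr (Or.inl hd),
            (mem_some t i _).mpr ⟨hd, by rw [hm]; exact j.isLt, ?_⟩⟩
          convert hj using 2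
          exact Fin.ext hm
        · -- internal edge
          simp only at h1 h2 h3
          subst h1; subst h2; subst h3
          have hxy : x ≠ y := fun hh => hne (by rw [hh])
          have hadj' : (treeT ℓ h).Adj x y := by
            rw [treeT, SimpleGraph.fromRel_adj]
            exact ⟨hxy, Or.inl h4⟩
          obtain ⟨j, hxj, hyj⟩ := D.edgeCover hadj'
          obtain ⟨t, hd, hm⟩ := mkIdx i j.val (le_of_lt j.isLt)
          refine ⟨t, (mem_some t i x).mpr ⟨hd, by rw [hm]; exact j.isLt, ?_⟩,
            (mem_some t i y).mpr ⟨hd, by rw [hm]; exact j.isLt, ?_⟩⟩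
          · convert hxj using 2; exact Fin.ext hm
          · convert hyj using 2; exact Fin.ext hm
      rcases hor with hA | hA
      · exact key u v hne hA
      · obtain ⟨t, h1, h2⟩ := key v u (Ne.symm hne) hA
        exact ⟨t, h2, h1⟩
    · -- interval
      rintro ⟨i, o⟩ t1 t2 t3 h12 h23 hm1 hm3
      have hd12 := div_mono t1 t2 h12
      have hd23 := div_mono t2 t3 h23
      cases o with
      | none =>
        rw [mem_none] at hm1 hm3 ⊢
        have hmodlt1 := Nat.mod_lt t1.val hBpos
        have hmodlt2 := Nat.mod_lt t2.val hBpos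
        have hmodlt3 := Nat.mod_lt t3.val hBpos
        rcases hm1 with hm1 | ⟨hm1r, hm1d⟩ <;> rcases hm3 with hm3 | ⟨hm3r, hm3d⟩
        · left; omega
        · omega
        · -- t1 is transition, t3 in block i
          by_cases hd2 : t2.val / B = i.val
          · exact Or.inl hd2
          · have hd21 : t2.val / B = t1.val / B := by omega
            right
            refine ⟨?_, by omega⟩
            have := mod_mono t1 t2 h12 hd21.symm
            omega
        · -- both transitions: t1/B = t3/B = i-1
          right
          have hd21 : t2.val / B = t1.val / B := by omega
          refine ⟨?_, by omega⟩
          have := mod_mono t1 t2 h12 hd21.symm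
          omega
      | some x =>
        rw [mem_some] at hm1 hm3 ⊢
        obtain ⟨hd1, hr1, hx1⟩ := hm1
        obtain ⟨hd3, hr3, hx3⟩ := hm3
        have hd2 : t2.val / B = i.val := by omega
        have hre1 : t1.val / B = t2.val / B := by omega
        have hre2 : t2.val / B = t3.val / B := by omega
        have hmm1 := mod_mono t1 t2 h12 hre1
        have hmm2 := mod_mono t2 t3 h23 hre2
        have hr2 : t2.val % B < D.m := by omega
        refine ⟨hd2, hr2, ?_⟩
        exact D.interval x ⟨t1.val % B, hr1⟩ ⟨t2.val % B, hr2⟩ ⟨t3.val % B, hr3⟩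
          hmm1 hmm2 hx1 hx3
    · -- card bound
      intro t
      show (bagF t).card ≤ h + 1 + 1
      simp only [hbagF]
      split_ifs with hr hq
      · have h1 := Finset.card_insert_le
          ((⟨t.val / B, hdivlt t⟩ : Fin ℓ), (none : Option (Vtx ℓ h)))
          ((D.bags ⟨t.val % B, hr⟩).image
            (fun x => ((⟨t.val / B, hdivlt t⟩ : Fin ℓ), some x)))
        have h2 := Finset.card_image_le (s := D.bags ⟨t.val % B, hr⟩)
          (f := fun x => ((⟨t.val / B, hdivlt t⟩ : Fin ℓ), some x))
        have h3 := hD ⟨t.val % B, hr⟩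
        omega
      · refine le_trans (Finset.card_insert_le _ _) ?_
        rw [Finset.card_singleton]
        omega
      · rw [Finset.card_singleton]
        omega

lemma nbr_none {ℓ : ℕ} [NeZero ℓ] {h : ℕ} {i : Fin ℓ} {u : Vtx ℓ (h+1)}
    (hadj : (treeT ℓ (h+1)).Adj ((i, none) : Vtx ℓ (h+1)) u) :
    (u.2 = none ∧ (u.1.val + 1 = i.val ∨ i.val + 1 = u.1.val)) ∨
      u = (i, some (treeRoot ℓ h)) := by
  rw [treeT, SimpleGraph.fromRel_adj] at hadj
  obtain ⟨-, hor⟩ := hadj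
  rcases hor with hA | hA
  · rcases hA with ⟨-, h2, h3⟩ | ⟨h1, -, h3⟩ | ⟨-, x, y, h2, -, -⟩
    · exact Or.inl ⟨h2, Or.inr h3⟩
    · right
      obtain ⟨u1, u2⟩ := u
      simp only at h1 h3
      rw [h3, ← h1]
    · exact absurd h2 (by simp)
  · rcases hA with ⟨h1, -, h3⟩ | ⟨-, -, h3⟩ | ⟨-, x, y, -, h3, -⟩
    · exact Or.inl ⟨h1, Or.inl h3⟩
    · exact absurd h3 (by simp)
    · exact absurd h3 (by simp)

lemma nbr_some {ℓ : ℕ} [NeZero ℓ] {h : ℕ} {i : Fin ℓ} {x : Vtx ℓ h} {u : Vtx ℓ (h+1)}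
    (hadj : (treeT ℓ (h+1)).Adj ((i, some x) : Vtx ℓ (h+1)) u) :
    (∃ y, u = (i, some y) ∧ (treeT ℓ h).Adj x y) ∨
      (x = treeRoot ℓ h ∧ u = (i, none)) := by
  rw [treeT, SimpleGraph.fromRel_adj] at hadj
  obtain ⟨hne, hor⟩ := hadj
  rcases hor with hA | hA
  · rcases hA with ⟨h1, -, -⟩ | ⟨-, h2, -⟩ | ⟨h1, a, y, h2, h3, h4⟩
    · exact absurd h1 (by simp)
    · exact absurd h2 (by simp)
    · obtain rfl : a = x := Option.some.inj h2.symm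
      left
      obtain ⟨u1, u2⟩ := u
      simp only at h1 h3
      refine ⟨y, by rw [h3, ← h1], ?_⟩
      rw [treeT, SimpleGraph.fromRel_adj]
      refine ⟨fun hh => hne ?_, Or.inl h4⟩
      rw [h3, ← h1, ← hh]
  · rcases hA with ⟨-, h2, -⟩ | ⟨h1, h2, h3⟩ | ⟨h1, y, a, h2, h3, h4⟩
    · exact absurd h2 (by simp)
    · right
      obtain rfl : x = treeRoot ℓ h := Option.some.inj h3
      obtain ⟨u1, u2⟩ := u
      simp only at h1 h2
      exact ⟨rfl, by rw [h2, h1]⟩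
    · obtain rfl : a = x := Option.some.inj h3.symm
      left
      obtain ⟨u1, u2⟩ := u
      simp only at h1 h2
      refine ⟨y, by rw [h2, h1], ?_⟩
      rw [treeT, SimpleGraph.fromRel_adj]
      refine ⟨fun hh => hne ?_, Or.inr h4⟩
      rw [h2, h1, ← hh]

lemma deg_bound (ℓ : ℕ) [NeZero ℓ] : ∀ h : ℕ,
    (∀ v : Vtx ℓ h, ((treeT ℓ h).neighborSet v).ncard ≤ 3) ∧
      ((treeT ℓ h).neighborSet (treeRoot ℓ h)).ncard ≤ 2 := by
  intro h
  induction h with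
  | zero =>
    have hempty : ∀ v : Vtx ℓ 0, (treeT ℓ 0).neighborSet v = ∅ := by
      intro v
      ext u
      simp only [SimpleGraph.mem_neighborSet, Set.mem_empty_iff_false, iff_false]
      intro hadj
      rw [treeT, SimpleGraph.fromRel_adj] at hadj
      rcases hadj.2 with hf | hf <;> exact hf.elim
    constructor
    · intro v; rw [hempty v]; simp
    · rw [hempty _]; simp
  | succ h ih =>
    obtain ⟨ih3, ih2⟩ := ih
    -- neighbor set of a spine vertex
    have spine_sub : ∀ i : Fin ℓ,
        (treeT ℓ (h+1)).neighborSet ((i, none) : Vtx ℓ (h+1)) ⊆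
          {(if hi : 0 < i.val then (⟨i.val - 1, by omega⟩ : Fin ℓ) else i, none),
           (if hi : i.val + 1 < ℓ then (⟨i.val + 1, hi⟩ : Fin ℓ) else i, none),
           ((i, some (treeRoot ℓ h)) : Vtx ℓ (h+1))} := by
      intro i u hu
      rcases nbr_none hu with ⟨h1, h2 | h2⟩ | h1
      · left
        obtain ⟨u1, u2⟩ := u
        simp only at h1 h2
        subst h1
        have hi : 0 < i.val := by omega
        rw [dif_pos hi]
        rw [vpair_eq]
        exact ⟨Fin.ext (show u1.val = i.val - 1 by omega), rfl⟩
      · right; left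
        obtain ⟨u1, u2⟩ := u
        simp only at h1 h2
        subst h1
        have hi : i.val + 1 < ℓ := by rw [h2]; exact u1.isLt
        rw [dif_pos hi, vpair_eq]
        exact ⟨Fin.ext (show u1.val = i.val + 1 by omega), rfl⟩
      · right; right
        exact h1
    have spine3 : ∀ i : Fin ℓ,
        ((treeT ℓ (h+1)).neighborSet ((i, none) : Vtx ℓ (h+1))).ncard ≤ 3 := by
      intro i
      refine le_trans (Set.ncard_le_ncard (spine_sub i) (Set.toFinite _)) ?_
      refine le_trans (Set.ncard_insert_le _ _) ?_
      have : ({(if hi : i.val + 1 < ℓ then (⟨i.val + 1, hi⟩ : Fin ℓ) else i, none),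
           ((i, some (treeRoot ℓ h)) : Vtx ℓ (h+1))} : Set (Vtx ℓ (h+1))).ncard ≤ 2 := by
        refine le_trans (Set.ncard_insert_le _ _) ?_
        rw [Set.ncard_singleton]
      omega
    constructor
    · rintro ⟨i, o⟩
      cases o with
      | none => exact spine3 i
      | some x =>
        have hsub : (treeT ℓ (h+1)).neighborSet ((i, some x) : Vtx ℓ (h+1)) ⊆
            insert ((i, none) : Vtx ℓ (h+1))
              ((fun y => ((i, some y) : Vtx ℓ (h+1))) '' (treeT ℓ h).neighborSet x) := by
          intro u hu
          rcases nbr_some hu with ⟨y, rfl, hy⟩ | ⟨-, rfl⟩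
          · exact Set.mem_insert_iff.mpr (Or.inr ⟨y, hy, rfl⟩)
          · exact Set.mem_insert_iff.mpr (Or.inl rfl)
        by_cases hx : x = treeRoot ℓ h
        · subst hx
          refine le_trans (Set.ncard_le_ncard hsub (Set.toFinite _)) ?_
          refine le_trans (Set.ncard_insert_le _ _) ?_
          have himg : ((fun y => ((i, some y) : Vtx ℓ (h+1))) ''
              (treeT ℓ h).neighborSet (treeRoot ℓ h)).ncard ≤ 2 := by
            rw [Set.ncard_image_of_injective _
              (fun a b hab => Option.some.inj (congrArg Prod.snd hab))]
            exact ih2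
          omega
        · have hsub' : (treeT ℓ (h+1)).neighborSet ((i, some x) : Vtx ℓ (h+1)) ⊆
              ((fun y => ((i, some y) : Vtx ℓ (h+1))) '' (treeT ℓ h).neighborSet x) := by
            intro u hu
            rcases nbr_some hu with ⟨y, rfl, hy⟩ | ⟨hroot, rfl⟩
            · exact ⟨y, hy, rfl⟩
            · exact absurd hroot hx
          refine le_trans (Set.ncard_le_ncard hsub' (Set.toFinite _)) ?_
          rw [Set.ncard_image_of_injective _
            (fun a b hab => Option.some.inj (congrArg Prod.snd hab))]
          exact ih3 x
    · -- root of T_{h+1} has degree ≤ 2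
      have hsub : (treeT ℓ (h+1)).neighborSet (treeRoot ℓ (h+1)) ⊆
          {(if hi : (0:ℕ) + 1 < ℓ then (⟨1, hi⟩ : Fin ℓ) else 0, none),
           (((0 : Fin ℓ), some (treeRoot ℓ h)) : Vtx ℓ (h+1))} := by
        intro u hu
        have hu' : (treeT ℓ (h+1)).Adj (((0 : Fin ℓ), none) : Vtx ℓ (h+1)) u := hu
        rcases nbr_none hu' with ⟨h1, h2 | h2⟩ | h1
        · exfalso
          have : (0 : Fin ℓ).val = 0 := by simp
          omega
        · left
          obtain ⟨u1, u2⟩ := u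
          simp only at h1 h2
          subst h1
          have h0 : (0 : Fin ℓ).val = 0 := by simp
          have hi : (0:ℕ) + 1 < ℓ := by omega
          rw [dif_pos hi, vpair_eq]
          exact ⟨Fin.ext (show u1.val = 1 by omega), rfl⟩
        · right
          rw [h1]
          rfl
      refine le_trans (Set.ncard_le_ncard hsub (Set.toFinite _)) ?_
      refine le_trans (Set.ncard_insert_le _ _) ?_
      rw [Set.ncard_singleton]

/-- For every `h ≥ 0` and `ℓ ≥ 4`, the tree `T_{h,ℓ}` has pathwidth
exactly `h`, and every vertex of `T_{h,ℓ}` has degree at most `3`. -/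
theorem hard_tree_pathwidth_and_degree (h ℓ : ℕ) [NeZero ℓ] (hℓ : 4 ≤ ℓ) :
    pathwidth (treeT ℓ h) = h ∧
    ∀ v : Vtx ℓ h, ((treeT ℓ h).neighborSet v).ncard ≤ 3 := by
  constructor
  · obtain ⟨D, hD⟩ := ub ℓ h
    have hmem : h ∈ { w | ∃ D : PathDecomp (treeT ℓ h), ∀ i, (D.bags i).card ≤ w + 1 } :=
      ⟨D, hD⟩
    have hle : pathwidth (treeT ℓ h) ≤ h := Nat.sInf_le hmem
    have hge : h ≤ pathwidth (treeT ℓ h) := by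
      have hne : { w | ∃ D : PathDecomp (treeT ℓ h), ∀ i, (D.bags i).card ≤ w + 1 }.Nonempty :=
        ⟨h, hmem⟩
      obtain ⟨D', hD'⟩ := Nat.sInf_mem hne
      obtain ⟨b, hb⟩ := lb ℓ (by omega) h D'
      have := hD' b
      rw [pathwidth]
      omega
    omega
  · exact (deg_bound ℓ h).1
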